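/- arXiv:2512.13740 — 2 statements merged into one kernel-verified Lean document; each statement's English description precedes it below -/
import Mathlib

section
/- For M ∈ ℕ, let f_0, f_1, …, f_{M+1} be real numbers satisfying the alternating condition (−1)^i (f_{i+1} − f_i) > 0 for all i = 0, …, M (or the same with the opposite overall sign). Then there exist a polynomial p of degree M+1 and real numbers y_0 < y_1 < ⋯ < y_{M+1} such that p(y_i) = f_i for i = 0, …, M+1 and p'(y_i) = 0 for i = 1, …, M. -/
namespace Stmt7
open Polynomial Finset

variable (n : ℕ)

/-- cumulative sum of gaps, as a continuous linear map -/
noncomputable def zL (k : ℕ) : (Fin n → ℝ) →L[ℝ] ℝ :=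
  ∑ i ∈ Finset.univ.filter (fun i : Fin n => (i : ℕ) < k), ContinuousLinearMap.proj i

variable {n}

lemma zL_apply (k : ℕ) (s : Fin n → ℝ) :
    zL n k s = ∑ i ∈ Finset.univ.filter (fun i : Fin n => (i : ℕ) < k), s i := by
  simp [zL]

lemma zL_zero (s : Fin n → ℝ) : zL n 0 s = 0 := by simp [zL_apply]

lemma zL_succ {k : ℕ} (hk : k < n) (s : Fin n → ℝ) :
    zL n (k+1) s = zL n k s + s ⟨k, hk⟩ := by
  rw [zL_apply, zL_apply]
  have : Finset.univ.filter (fun i : Fin n => (i : ℕ) < k + 1)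
      = insert (⟨k, hk⟩ : Fin n) (Finset.univ.filter (fun i : Fin n => (i : ℕ) < k)) := by
    ext i
    simp only [mem_filter, mem_univ, true_and, mem_insert]
    constructor
    · intro h
      rcases Nat.lt_succ_iff_lt_or_eq.1 h with h | h
      · exact Or.inr h
      · exact Or.inl (by ext; exact h)
    · rintro (rfl | h)
      · exact Nat.lt_succ_self _
      · exact Nat.lt_succ_of_lt h
  rw [this, Finset.sum_insert (by simp)]
  ring

lemma zL_stable {k : ℕ} (hk : n ≤ k) (s : Fin n → ℝ) : zL n k s = zL n n s := by
  rw [zL_apply, zL_apply]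
  congr 1
  ext i
  simp only [mem_filter, mem_univ, true_and]
  exact ⟨fun _ => i.2, fun _ => lt_of_lt_of_le i.2 hk⟩

def U : Set (Fin n → ℝ) := {s | ∀ i, 0 < s i}

lemma zL_strict {s : Fin n → ℝ} (hs : s ∈ U) {k l : ℕ} (hkl : k < l) (hl : l ≤ n) :
    zL n k s < zL n l s := by
  induction l with
  | zero => omega
  | succ m ih =>
    have hm : m < n := by omega
    have h2 : zL n m s < zL n (m+1) s := by
      rw [zL_succ hm]; linarith [hs ⟨m, hm⟩]
    rcases Nat.lt_succ_iff_lt_or_eq.1 hkl with h | h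
    · exact lt_trans (ih h (by omega)) h2
    · subst h; exact h2

lemma zL_mono {s : Fin n → ℝ} (hs : s ∈ U) {k l : ℕ} (hkl : k ≤ l) (hl : l ≤ n) :
    zL n k s ≤ zL n l s := by
  rcases eq_or_lt_of_le hkl with rfl | h
  · exact le_refl _
  · exact le_of_lt (zL_strict hs h hl)

variable (n)

/-- the monic polynomial with the n+1 prescribed roots -/
noncomputable def w (s : Fin n → ℝ) : ℝ[X] :=
  ∏ i ∈ range (n+1), (X - C (zL n i s))

/-- polynomial "antiderivative" adapted to degree ≤ n+1 polynomials -/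
noncomputable def pint (P : ℝ[X]) : ℝ[X] :=
  ∑ k ∈ range (n+2), C (P.coeff k / (k+1)) * X^(k+1)

variable {n}

lemma w_monic (s : Fin n → ℝ) : (w n s).Monic :=
  monic_prod_of_monic _ _ (fun _ _ => monic_X_sub_C _)

lemma w_natDegree (s : Fin n → ℝ) : (w n s).natDegree = n + 1 := by
  rw [w, natDegree_prod_of_monic _ _ (fun _ _ => monic_X_sub_C _)]
  simp

lemma eval_w (s : Fin n → ℝ) (x : ℝ) :
    eval x (w n s) = ∏ i ∈ range (n+1), (x - zL n i s) := by
  simp [w, eval_prod]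

lemma eval_w_root (s : Fin n → ℝ) {k : ℕ} (hk : k ≤ n) : eval (zL n k s) (w n s) = 0 := by
  rw [eval_w]
  apply Finset.prod_eq_zero (i := k) (by simp; omega)
  simp

lemma pint_deriv {P : ℝ[X]} (hP : P.natDegree ≤ n + 1) :
    derivative (pint n P) = P := by
  rw [pint]
  rw [derivative_sum]
  have : ∀ k ∈ range (n+2), derivative (C (P.coeff k / (k+1)) * X^(k+1) : ℝ[X])
      = C (P.coeff k) * X^k := by
    intro k _
    rw [derivative_C_mul, derivative_X_pow]
    simp only [Nat.add_sub_cancel, Nat.cast_add, Nat.cast_one]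
    rw [← mul_assoc, ← C_mul]
    congr 2
    have : ((k : ℝ) + 1) ≠ 0 := by positivity
    field_simp
  rw [Finset.sum_congr rfl this]
  conv_rhs => rw [P.as_sum_range' (n+2) (by omega)]
  simp [C_mul_X_pow_eq_monomial]

lemma eval_pint_zero (P : ℝ[X]) : eval 0 (pint n P) = 0 := by
  simp [pint, eval_finset_sum]

lemma pint_add (P Q : ℝ[X]) : pint n (P + Q) = pint n P + pint n Q := by
  rw [pint, pint, pint, ← Finset.sum_add_distrib]
  refine Finset.sum_congr rfl (fun k _ => ?_)
  rw [coeff_add, add_div, C_add, add_mul]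

lemma pint_C_mul (c : ℝ) (P : ℝ[X]) : pint n (C c * P) = C c * pint n (P) := by
  rw [pint, pint, Finset.mul_sum]
  refine Finset.sum_congr rfl (fun k _ => ?_)
  rw [coeff_C_mul, mul_div_assoc, C_mul, mul_assoc]

lemma natDegree_pint_le (P : ℝ[X]) : (pint n P).natDegree ≤ P.natDegree + 1 := by
  apply Polynomial.natDegree_sum_le_of_forall_le
  intro k _
  by_cases h : P.coeff k = 0
  · simp [h]
  · have hk : k ≤ P.natDegree := le_natDegree_of_ne_zero h
    calc (C (P.coeff k / (k+1)) * X^(k+1)).natDegree ≤ k + 1 := by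
          apply le_trans (natDegree_C_mul_le _ _)
          simp
      _ ≤ P.natDegree + 1 := by omega

lemma coeff_pint_top (P : ℝ[X]) (hP : P.natDegree ≤ n + 1) :
    (pint n P).coeff (n+2) = P.coeff (n+1) / (n+2) := by
  rw [pint, finset_sum_coeff]
  rw [Finset.sum_eq_single (n+1)]
  · simp; norm_num; ring_nf
  · intro k hk hne
    rw [coeff_C_mul, coeff_X_pow, if_neg (by omega)]
    ring
  · intro h; simp at h


/-! ### Lagrange nodes and representation -/

variable (n)

noncomputable def lb (t : ℕ) : ℝ[X] :=
  Lagrange.basis (range (n+2)) (fun i : ℕ => (i : ℝ)) t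

noncomputable def Pt (t : ℕ) : ℝ[X] := pint n (lb n t)

variable {n}

lemma nodes_inj : Set.InjOn (fun i : ℕ => (i : ℝ)) (range (n+2) : Finset ℕ) :=
  fun a _ b _ h => Nat.cast_injective h

lemma natDegree_lb {t : ℕ} (ht : t ∈ range (n+2)) : (lb n t).natDegree = n + 1 := by
  rw [lb, Lagrange.natDegree_basis nodes_inj ht]
  simp

lemma pint_sum {ι : Type*} (u : Finset ι) (g : ι → ℝ[X]) :
    pint n (∑ i ∈ u, g i) = ∑ i ∈ u, pint n (g i) := by
  classical
  induction u using Finset.induction_on with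
  | empty => simp [pint]
  | insert _ _ hx ih => rw [Finset.sum_insert hx, pint_add, ih, Finset.sum_insert hx]

/-- interpolation representation of a polynomial of degree ≤ n+1 -/
lemma interp_rep {P : ℝ[X]} (hP : P.natDegree ≤ n + 1) :
    P = ∑ t ∈ range (n+2), C (eval (t : ℝ) P) * lb n t := by
  have hdeg : P.degree < ((range (n+2)).card : ℕ) := by
    rw [Finset.card_range]
    exact lt_of_le_of_lt degree_le_natDegree (by exact_mod_cast Nat.lt_succ_of_le hP)
  have := Lagrange.eq_interpolate (f := P) (nodes_inj (n := n)) hdeg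
  rw [Lagrange.interpolate_apply] at this
  exact this

lemma eval_rep {P : ℝ[X]} (hP : P.natDegree ≤ n + 1) (x : ℝ) :
    eval x P = ∑ t ∈ range (n+2), eval (t : ℝ) P * eval x (lb n t) := by
  conv_lhs => rw [interp_rep hP]
  simp [eval_finset_sum]

lemma pint_rep {P : ℝ[X]} (hP : P.natDegree ≤ n + 1) (x : ℝ) :
    eval x (pint n P) = ∑ t ∈ range (n+2), eval (t : ℝ) P * eval x (Pt n t) := by
  conv_lhs => rw [interp_rep hP, pint_sum]
  rw [eval_finset_sum]
  refine Finset.sum_congr rfl (fun t _ => ?_)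
  rw [pint_C_mul, eval_C_mul, Pt]

lemma deriv_Pt {t : ℕ} (ht : t ∈ range (n+2)) : derivative (Pt n t) = lb n t :=
  pint_deriv (le_of_eq (natDegree_lb ht))

/-! ### The map G and its derivative -/

noncomputable def Afun (s : Fin n → ℝ) (x : ℝ) : ℝ := eval x (pint n (w n s))

noncomputable def Gfun (s : Fin n → ℝ) : Fin n → ℝ := fun j =>
  (-1:ℝ)^(n + (j:ℕ)) * (Afun s (zL n ((j:ℕ)+1) s) - Afun s (zL n (j:ℕ) s))

/-- direction polynomial -/
noncomputable def Qd (s δ : Fin n → ℝ) : ℝ[X] :=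
  -∑ i ∈ range (n+1), C (zL n i δ) * ∏ l ∈ (range (n+1)).erase i, (X - C (zL n l s))

lemma natDegree_Qd_le (s δ : Fin n → ℝ) : (Qd s δ).natDegree ≤ n := by
  rw [Qd, natDegree_neg]
  apply Polynomial.natDegree_sum_le_of_forall_le
  intro i hi
  apply le_trans (natDegree_C_mul_le _ _)
  have : (∏ l ∈ (range (n+1)).erase i, (X - C (zL n l s))).natDegree
      = ((range (n+1)).erase i).card := by
    rw [natDegree_prod_of_monic _ _ (fun _ _ => monic_X_sub_C _)]
    simp
  rw [this, Finset.card_erase_of_mem hi, Finset.card_range]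
  omega

/-- the derivative of `s ↦ eval t (w s)` -/
noncomputable def WD (s : Fin n → ℝ) (t : ℝ) : (Fin n → ℝ) →L[ℝ] ℝ :=
  ∑ i ∈ range (n+1), (∏ l ∈ (range (n+1)).erase i, (t - zL n l s)) • (-(zL n i))

lemma hasFDeriv_evalw (t : ℝ) (s : Fin n → ℝ) :
    HasFDerivAt (fun s => eval t (w n s)) (WD s t) s := by
  have : (fun s : Fin n → ℝ => eval t (w n s))
      = fun s => ∏ i ∈ range (n+1), (t - zL n i s) := by
    funext s; rw [eval_w]
  rw [this, WD]
  exact HasFDerivAt.finset_prod (fun i _ => ((zL n i).hasFDerivAt.const_sub t))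

lemma WD_apply (s δ : Fin n → ℝ) (t : ℝ) : WD s t δ = eval t (Qd s δ) := by
  rw [WD, Qd]
  simp only [ContinuousLinearMap.coe_sum', Finset.sum_apply, ContinuousLinearMap.coe_smul',
    Pi.smul_apply, ContinuousLinearMap.neg_apply, eval_neg, eval_finset_sum, eval_mul, eval_C,
    eval_prod, eval_sub, eval_X, smul_eq_mul, ← Finset.sum_neg_distrib]
  refine Finset.sum_congr rfl (fun i _ => ?_)
  ring

noncomputable def Ak (k : ℕ) (s : Fin n → ℝ) : ℝ := Afun s (zL n k s)

noncomputable def LA (k : ℕ) (s : Fin n → ℝ) : (Fin n → ℝ) →L[ℝ] ℝ :=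
  (∑ t ∈ range (n+2), (eval (zL n k s) (Pt n t)) • WD s t)
    + (eval (zL n k s) (w n s)) • zL n k

lemma Ak_rep (k : ℕ) (s : Fin n → ℝ) :
    Ak k s = ∑ t ∈ range (n+2), eval (t:ℝ) (w n s) * eval (zL n k s) (Pt n t) := by
  rw [Ak, Afun, pint_rep (le_of_eq (w_natDegree s))]

lemma hasFDeriv_Ak (k : ℕ) (s : Fin n → ℝ) : HasFDerivAt (Ak k) (LA k s) s := by
  have hrep : Ak k = fun s : Fin n → ℝ =>
      ∑ t ∈ range (n+2), eval (t:ℝ) (w n s) * eval (zL n k s) (Pt n t) := by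
    funext s; exact Ak_rep k s
  rw [hrep]
  have hterm : ∀ t ∈ range (n+2), HasFDerivAt
      (fun s : Fin n → ℝ => eval (t:ℝ) (w n s) * eval (zL n k s) (Pt n t))
      ((eval (t:ℝ) (w n s)) • ((eval (zL n k s) (lb n t)) • zL n k)
        + (eval (zL n k s) (Pt n t)) • WD s t) s := by
    intro t ht
    have h1 : HasFDerivAt (fun s : Fin n → ℝ => eval (zL n k s) (Pt n t))
        ((eval (zL n k s) (lb n t)) • zL n k) s := by
      have := (Polynomial.hasDerivAt (Pt n t) (zL n k s)).comp_hasFDerivAt s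
        (zL n k).hasFDerivAt
      rwa [deriv_Pt ht] at this
    exact (hasFDeriv_evalw (t:ℝ) s).mul h1
  have := HasFDerivAt.fun_sum hterm
  refine this.congr_fderiv ?_
  symm
  rw [LA]
  rw [Finset.sum_add_distrib]
  rw [add_comm]
  congr 1
  have : ∀ t ∈ range (n+2), (eval (t:ℝ) (w n s)) • ((eval (zL n k s) (lb n t)) • zL n k)
      = (eval (t:ℝ) (w n s) * eval (zL n k s) (lb n t)) • zL n k := by
    intro t _; rw [smul_smul]
  rw [Finset.sum_congr rfl this, ← Finset.sum_smul]
  congr 1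
  exact eval_rep (le_of_eq (w_natDegree s)) (zL n k s)

lemma LA_apply (k : ℕ) (s δ : Fin n → ℝ) :
    LA k s δ = eval (zL n k s) (pint n (Qd s δ)) + eval (zL n k s) (w n s) * zL n k δ := by
  rw [LA]
  simp only [ContinuousLinearMap.add_apply, ContinuousLinearMap.coe_sum', Finset.sum_apply,
    ContinuousLinearMap.coe_smul', Pi.smul_apply, smul_eq_mul]
  congr 1
  rw [pint_rep (le_trans (natDegree_Qd_le s δ) (by omega))]
  refine Finset.sum_congr rfl (fun t _ => ?_)
  rw [WD_apply]
  ring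

noncomputable def LG (s : Fin n → ℝ) : (Fin n → ℝ) →L[ℝ] (Fin n → ℝ) :=
  ContinuousLinearMap.pi
    (fun j : Fin n => ((-1:ℝ)^(n + (j:ℕ))) • (LA ((j:ℕ)+1) s - LA (j:ℕ) s))

lemma hasFDeriv_G (s : Fin n → ℝ) : HasFDerivAt Gfun (LG s) s := by
  rw [LG]
  apply hasFDerivAt_pi.2
  intro j
  exact ((hasFDeriv_Ak ((j:ℕ)+1) s).sub (hasFDeriv_Ak (j:ℕ) s)).const_mul _


/-! ### Injectivity of the derivative -/

lemma zfin_strictMono {s : Fin n → ℝ} (hs : s ∈ U) :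
    StrictMono (fun k : Fin (n+1) => zL n (k:ℕ) s) :=
  fun k l h => zL_strict hs h (Nat.lt_succ_iff.1 l.2)

lemma root_prod_ne_zero {s : Fin n → ℝ} (hs : s ∈ U) {k : ℕ} (hk : k ∈ range (n+1)) :
    ∏ l ∈ (range (n+1)).erase k, (zL n k s - zL n l s) ≠ 0 := by
  rw [Finset.prod_ne_zero_iff]
  intro l hl
  rw [Finset.mem_erase, Finset.mem_range] at hl
  rw [Finset.mem_range] at hk
  intro hzero
  have : zL n k s = zL n l s := by linarith [sub_eq_zero.1 hzero]
  rcases lt_or_gt_of_ne hl.1 with h | h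
  · exact absurd this (ne_of_gt (zL_strict hs h (by omega)))
  · exact absurd this.symm (ne_of_gt (zL_strict hs h (by omega)))

lemma eval_Qd_at_root (s δ : Fin n → ℝ) {k : ℕ} (hk : k ∈ range (n+1)) :
    eval (zL n k s) (Qd s δ)
      = -(zL n k δ) * ∏ l ∈ (range (n+1)).erase k, (zL n k s - zL n l s) := by
  rw [Qd, eval_neg, eval_finset_sum]
  rw [Finset.sum_eq_single k]
  · simp [eval_prod]
  · intro i hi hik
    rw [eval_mul, eval_prod]
    have : (eval (zL n k s) (X - C (zL n k s))) = 0 := by simp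
    rw [Finset.prod_eq_zero (Finset.mem_erase.2 ⟨fun h => hik h.symm, hk⟩) this, mul_zero]
  · intro h; exact absurd hk h

lemma eval_derivw_at_root (s : Fin n → ℝ) {k : ℕ} (hk : k ∈ range (n+1)) :
    eval (zL n k s) (derivative (w n s))
      = ∏ l ∈ (range (n+1)).erase k, (zL n k s - zL n l s) := by
  have hw : w n s = (X - C (zL n k s)) * ∏ l ∈ (range (n+1)).erase k, (X - C (zL n l s)) :=
    (Finset.mul_prod_erase _ _ hk).symm
  rw [hw, derivative_mul]
  simp [eval_prod]

lemma LG_inj {s : Fin n → ℝ} (hs : s ∈ U) {δ : Fin n → ℝ} (h : LG s δ = 0) : δ = 0 := by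
  set R := pint n (Qd s δ) with hR
  -- all LA-values at roots are evals of R
  have hLA : ∀ k : ℕ, k ≤ n → LA k s δ = eval (zL n k s) R := by
    intro k hk
    rw [LA_apply, eval_w_root s hk, zero_mul, add_zero]
  -- adjacent evals of R agree
  have hadj : ∀ j : Fin n, eval (zL n ((j:ℕ)+1) s) R = eval (zL n (j:ℕ) s) R := by
    intro j
    have := congrFun h j
    rw [LG] at this
    simp only [ContinuousLinearMap.pi_apply, ContinuousLinearMap.smul_apply,
      ContinuousLinearMap.sub_apply, Pi.zero_apply, smul_eq_mul] at this
    have hne : ((-1:ℝ))^(n + (j:ℕ)) ≠ 0 := by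
      simp
    have h2 : LA ((j:ℕ)+1) s δ - LA (j:ℕ) s δ = 0 := by
      rcases mul_eq_zero.1 this with h' | h'
      · exact absurd h' hne
      · exact h'
    have e1 := hLA ((j:ℕ)+1) j.2
    have e2 := hLA (j:ℕ) (le_of_lt j.2)
    rw [e1, e2] at h2
    linarith
  -- all evals of R vanish
  have hvanish : ∀ k : ℕ, k ≤ n → eval (zL n k s) R = 0 := by
    intro k hk
    induction k with
    | zero => rw [zL_zero]; exact eval_pint_zero _
    | succ m ih =>
      have hm : m < n := hk
      rw [hadj ⟨m, hm⟩]
      exact ih (by omega)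
  set a := R.coeff (n+1) with ha
  set K := R - C a * w n s with hK
  have hKev : ∀ k : Fin (n+1), eval (zL n (k:ℕ) s) K = 0 := by
    intro k
    rw [hK, eval_sub, eval_mul, eval_C, hvanish _ (Nat.lt_succ_iff.1 k.2),
      eval_w_root s (Nat.lt_succ_iff.1 k.2), mul_zero, sub_zero]
  have hKdeg : K.natDegree ≤ n + 1 := by
    apply le_trans (natDegree_sub_le _ _)
    apply max_le
    · exact le_trans (natDegree_pint_le _) (by linarith [natDegree_Qd_le s δ])
    · exact le_trans (natDegree_C_mul_le _ _) (le_of_eq (w_natDegree s))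
  have hKcoeff : K.coeff (n+1) = 0 := by
    rw [hK, coeff_sub, coeff_C_mul]
    have : (w n s).coeff (n+1) = 1 := by
      have := (w_monic s).coeff_natDegree
      rwa [w_natDegree s] at this
    rw [this, mul_one, ← ha, sub_self]
  have hKzero : K = 0 := by
    rcases eq_or_ne K 0 with h0 | h0
    · exact h0
    · have hlt : K.natDegree < n + 1 := by
        rcases lt_or_eq_of_le hKdeg with h' | h'
        · exact h'
        · exfalso
          have : K.leadingCoeff = 0 := by rw [leadingCoeff, h']; exact hKcoeff
          exact h0 (leadingCoeff_eq_zero.1 this)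
      exact eq_zero_of_natDegree_lt_card_of_eval_eq_zero K
        (zfin_strictMono hs).injective hKev (by simpa using hlt)
  have hRw : R = C a * w n s := by
    have := sub_eq_zero.1 hKzero
    exact this
  have hQd : Qd s δ = C a * derivative (w n s) := by
    have hd : derivative R = Qd s δ :=
      pint_deriv (le_trans (natDegree_Qd_le s δ) (by omega))
    rw [← hd, hRw, derivative_C_mul]
  have hzd : ∀ k : ℕ, k ∈ range (n+1) → zL n k δ = -a := by
    intro k hk
    have e1 := eval_Qd_at_root s δ hk
    have e2 : eval (zL n k s) (Qd s δ)
        = a * ∏ l ∈ (range (n+1)).erase k, (zL n k s - zL n l s) := by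
      rw [hQd, eval_mul, eval_C, eval_derivw_at_root s hk]
    have hPi := root_prod_ne_zero hs hk
    have h3 := e1.symm.trans e2
    have h4 := mul_right_cancel₀ hPi h3
    linarith
  have ha0 : a = 0 := by
    have := hzd 0 (by simp)
    rw [zL_zero] at this
    linarith
  funext i
  have h1 := hzd (i:ℕ) (Finset.mem_range.2 (by omega))
  have h2 := hzd ((i:ℕ)+1) (Finset.mem_range.2 (by omega))
  rw [ha0] at h1 h2
  rw [zL_succ i.2 δ, h1] at h2
  simpa using h2

/-! ### Smoothness -/

lemma contDiff_evalpoly (p : ℝ[X]) : ContDiff ℝ (⊤ : ℕ∞) (fun x : ℝ => eval x p) := by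
  induction p using Polynomial.induction_on with
  | C a => simpa using contDiff_const
  | add q r hq hr => simpa using hq.add hr
  | monomial m a h => simpa [pow_succ, ← mul_assoc] using h.mul contDiff_id

lemma contDiff_finprod {ι : Type*} (u : Finset ι) (g : ι → (Fin n → ℝ) → ℝ)
    (h : ∀ i ∈ u, ContDiff ℝ (⊤ : ℕ∞) (g i)) :
    ContDiff ℝ (⊤ : ℕ∞) (fun x => ∏ i ∈ u, g i x) := by
  classical
  induction u using Finset.induction_on with
  | empty => simpa using contDiff_const
  | insert a u' hx ih =>
    rw [funext (fun x => Finset.prod_insert hx)]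
    exact (h a (Finset.mem_insert_self a u')).mul
      (ih (fun i hi => h i (Finset.mem_insert_of_mem hi)))

lemma contDiff_evalw (t : ℕ) : ContDiff ℝ (⊤ : ℕ∞) (fun s : Fin n → ℝ => eval (t:ℝ) (w n s)) := by
  have : (fun s : Fin n → ℝ => eval (t:ℝ) (w n s))
      = fun s => ∏ i ∈ range (n+1), ((t:ℝ) - zL n i s) := by
    funext s; rw [eval_w]
  rw [this]
  exact contDiff_finprod _ _ (fun i _ => contDiff_const.sub (zL n i).contDiff)

lemma contDiff_Ak (k : ℕ) : ContDiff ℝ (⊤ : ℕ∞) (Ak (n := n) k) := by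
  have : Ak (n := n) k = fun s =>
      ∑ t ∈ range (n+2), eval (t:ℝ) (w n s) * eval (zL n k s) (Pt n t) := by
    funext s; exact Ak_rep k s
  rw [this]
  apply ContDiff.sum
  intro t _
  exact (contDiff_evalw t).mul ((contDiff_evalpoly (Pt n t)).comp (zL n k).contDiff)

lemma contDiff_G : ContDiff ℝ (⊤ : ℕ∞) (Gfun (n := n)) := by
  apply contDiff_pi.2
  intro j
  exact contDiff_const.mul ((contDiff_Ak ((j:ℕ)+1)).sub (contDiff_Ak (j:ℕ)))


/-! ### Integral representation, sign, bounds -/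

lemma hasDerivAt_Afun (s : Fin n → ℝ) (x : ℝ) :
    HasDerivAt (fun y => Afun s y) (eval x (w n s)) x := by
  have := Polynomial.hasDerivAt (pint n (w n s)) x
  rwa [pint_deriv (le_of_eq (w_natDegree s))] at this

lemma Afun_sub_integral (s : Fin n → ℝ) (a b : ℝ) :
    ∫ u in a..b, eval u (w n s) = Afun s b - Afun s a := by
  apply intervalIntegral.integral_eq_sub_of_hasDerivAt
  · exact fun x _ => hasDerivAt_Afun s x
  · exact ((w n s).continuous_aeval).intervalIntegrable a b

lemma sign_w {s : Fin n → ℝ} (hs : s ∈ U) {j : ℕ} (hj : j < n) {u : ℝ}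
    (hu1 : zL n j s < u) (hu2 : u ≤ zL n (j+1) s) :
    ((-1:ℝ))^(n+j) * eval u (w n s)
      = (∏ i ∈ Finset.Ico 0 (j+1), (u - zL n i s)) * ∏ i ∈ Finset.Ico (j+1) (n+1), (zL n i s - u) := by
  rw [eval_w]
  rw [range_eq_Ico, ← Finset.prod_Ico_consecutive _ (Nat.zero_le (j+1)) (by omega)]
  have h2 : ∏ i ∈ Finset.Ico (j+1) (n+1), (u - zL n i s)
      = ((-1:ℝ))^(n-j) * ∏ i ∈ Finset.Ico (j+1) (n+1), (zL n i s - u) := by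
    have : ∀ i ∈ Finset.Ico (j+1) (n+1), (u - zL n i s) = (-1) * (zL n i s - u) := by
      intro i _; ring
    rw [Finset.prod_congr rfl this, Finset.prod_mul_distrib, Finset.prod_const]
    congr 2
    rw [Nat.card_Ico]
    omega
  rw [h2]
  have hsign : ((-1:ℝ))^(n+j) * ((-1:ℝ))^(n-j) = 1 := by
    rw [← pow_add]
    have : n + j + (n - j) = 2*n := by omega
    rw [this]
    exact Even.neg_one_pow (by exact ⟨n, by ring⟩)
  linear_combination ((∏ i ∈ Finset.Ico 0 (j+1), (u - zL n i s))
    * ∏ i ∈ Finset.Ico (j+1) (n+1), (zL n i s - u)) * hsign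

lemma sign_w_pos {s : Fin n → ℝ} (hs : s ∈ U) {j : ℕ} (hj : j < n) {u : ℝ}
    (hu1 : zL n j s < u) (hu2 : u < zL n (j+1) s) :
    0 < ((-1:ℝ))^(n+j) * eval u (w n s) := by
  rw [sign_w hs hj hu1 (le_of_lt hu2)]
  apply mul_pos
  · apply Finset.prod_pos
    intro i hi
    rw [Finset.mem_Ico] at hi
    have : zL n i s ≤ zL n j s := zL_mono hs (by omega) (by omega)
    linarith
  · apply Finset.prod_pos
    intro i hi
    rw [Finset.mem_Ico] at hi
    have : zL n (j+1) s ≤ zL n i s := zL_mono hs (by omega) (by omega)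
    linarith

lemma sign_w_nonneg {s : Fin n → ℝ} (hs : s ∈ U) {j : ℕ} (hj : j < n) {u : ℝ}
    (hu1 : zL n j s < u) (hu2 : u ≤ zL n (j+1) s) :
    0 ≤ ((-1:ℝ))^(n+j) * eval u (w n s) := by
  rw [sign_w hs hj hu1 hu2]
  apply mul_nonneg
  · apply Finset.prod_nonneg
    intro i hi
    rw [Finset.mem_Ico] at hi
    have : zL n i s ≤ zL n j s := zL_mono hs (by omega) (by omega)
    linarith
  · apply Finset.prod_nonneg
    intro i hi
    rw [Finset.mem_Ico] at hi
    have : zL n (j+1) s ≤ zL n i s := zL_mono hs (by omega) (by omega)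
    linarith

lemma Gfun_eq_integral (s : Fin n → ℝ) (j : Fin n) :
    Gfun s j = ∫ u in (zL n (j:ℕ) s)..(zL n ((j:ℕ)+1) s), ((-1:ℝ))^(n+(j:ℕ)) * eval u (w n s) := by
  rw [intervalIntegral.integral_const_mul, Afun_sub_integral, Gfun]

lemma Gfun_pos {s : Fin n → ℝ} (hs : s ∈ U) (j : Fin n) : 0 < Gfun s j := by
  rw [Gfun_eq_integral]
  apply intervalIntegral.intervalIntegral_pos_of_pos_on
  · exact (continuous_const.mul ((w n s).continuous_aeval)).intervalIntegrable _ _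
  · intro x hx
    exact sign_w_pos hs j.2 hx.1 hx.2
  · exact zL_strict hs (Nat.lt_succ_self _) j.2

lemma gap_eq (s : Fin n → ℝ) (j : Fin n) : zL n ((j:ℕ)+1) s - zL n (j:ℕ) s = s j := by
  rw [zL_succ j.2]; simp

lemma Gfun_le {s : Fin n → ℝ} (hs : s ∈ U) {B : Fin n → ℝ} (hB : ∀ i, s i ≤ B i) (j : Fin n) :
    Gfun s j ≤ s j * (1 + ∑ i, B i)^(n+1) := by
  have hBnn : 0 ≤ ∑ i, B i := by
    apply Finset.sum_nonneg
    intro i _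
    exact le_trans (le_of_lt (hs i)) (hB i)
  have hzB : ∀ k : ℕ, 0 ≤ zL n k s ∧ zL n k s ≤ ∑ i, B i := by
    intro k
    constructor
    · rw [zL_apply]
      apply Finset.sum_nonneg
      intro i _; exact le_of_lt (hs i)
    · rw [zL_apply]
      calc ∑ i ∈ Finset.univ.filter (fun i : Fin n => (i:ℕ) < k), s i
          ≤ ∑ i, s i := Finset.sum_le_sum_of_subset_of_nonneg (Finset.filter_subset _ _)
            (fun i _ _ => le_of_lt (hs i))
        _ ≤ ∑ i, B i := Finset.sum_le_sum (fun i _ => hB i)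
  have key : ‖∫ u in (zL n (j:ℕ) s)..(zL n ((j:ℕ)+1) s), ((-1:ℝ))^(n+(j:ℕ)) * eval u (w n s)‖
      ≤ (1 + ∑ i, B i)^(n+1) * |zL n ((j:ℕ)+1) s - zL n (j:ℕ) s| := by
    apply intervalIntegral.norm_integral_le_of_norm_le_const
    intro u hu
    rw [Set.uIoc_of_le (by linarith [zL_strict hs (Nat.lt_succ_self (j:ℕ)) j.2])] at hu
    have hu1 : 0 ≤ u := le_trans (hzB (j:ℕ)).1 (le_of_lt hu.1)
    have hu2 : u ≤ ∑ i, B i := le_trans hu.2 (hzB ((j:ℕ)+1)).2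
    have : ‖((-1:ℝ))^(n+(j:ℕ)) * eval u (w n s)‖ = ∏ i ∈ range (n+1), |u - zL n i s| := by
      rw [norm_mul, norm_pow, norm_neg, norm_one, one_pow, one_mul, eval_w,
        Real.norm_eq_abs, Finset.abs_prod]
    rw [this]
    calc ∏ i ∈ range (n+1), |u - zL n i s| ≤ ∏ i ∈ range (n+1), (1 + ∑ i, B i) := by
          apply Finset.prod_le_prod
          · intro i _; exact abs_nonneg _
          · intro i _
            rw [abs_le]
            constructor
            · linarith [(hzB i).2]
            · linarith [(hzB i).1]
      _ = (1 + ∑ i, B i)^(n+1) := by rw [Finset.prod_const, Finset.card_range]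
  rw [Real.norm_eq_abs, ← Gfun_eq_integral, gap_eq] at key
  have h1 : Gfun s j ≤ |Gfun s j| := le_abs_self _
  have h2 : |s j| = s j := abs_of_pos (hs j)
  rw [h2] at key
  linarith [key, h1]

lemma Gfun_ge {s : Fin n → ℝ} (hs : s ∈ U) (j : Fin n) :
    (s j / 2) * (s j / 4)^(n+1) ≤ Gfun s j := by
  set a := zL n (j:ℕ) s with hadef
  set b := zL n ((j:ℕ)+1) s with hbdef
  have hab : b - a = s j := gap_eq s j
  have hsj := hs j
  set c := a + s j / 4 with hcdef
  set d := b - s j / 4 with hddef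
  have hcd : c ≤ d := by rw [hcdef, hddef]; linarith
  have hac : a ≤ c := by rw [hcdef]; linarith
  have hdb : d ≤ b := by rw [hddef]; linarith
  have hintegrable : ∀ (x y : ℝ), IntervalIntegrable
      (fun u => ((-1:ℝ))^(n+(j:ℕ)) * eval u (w n s)) MeasureTheory.volume x y :=
    fun x y => (continuous_const.mul ((w n s).continuous_aeval)).intervalIntegrable _ _
  rw [Gfun_eq_integral]
  have step1 : ∫ u in c..d, ((-1:ℝ))^(n+(j:ℕ)) * eval u (w n s)
      ≤ ∫ u in a..b, ((-1:ℝ))^(n+(j:ℕ)) * eval u (w n s) := by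
    apply intervalIntegral.integral_mono_interval hac hcd hdb
    · exact MeasureTheory.ae_restrict_of_forall_mem measurableSet_Ioc
        (fun u hu => sign_w_nonneg hs j.2 hu.1 hu.2)
    · exact hintegrable a b
  refine le_trans ?_ step1
  have step2 : ∫ u in c..d, ((s j / 4)^(n+1) : ℝ)
      ≤ ∫ u in c..d, ((-1:ℝ))^(n+(j:ℕ)) * eval u (w n s) := by
    apply intervalIntegral.integral_mono_on hcd
    · exact intervalIntegrable_const
    · exact hintegrable c d
    · intro u hu
      have hu1 : a < u := lt_of_lt_of_le (by rw [hcdef]; linarith) hu.1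
      have hu2 : u ≤ b := le_trans hu.2 hdb
      rw [sign_w hs j.2 hu1 hu2]
      have hfac : ∀ i ∈ range (n+1), s j / 4 ≤ |u - zL n i s| := by
        intro i hi
        rw [Finset.mem_range] at hi
        rcases le_or_gt i (j:ℕ) with h | h
        · have : zL n i s ≤ a := zL_mono hs h (le_of_lt j.2)
          rw [abs_of_pos (by rw [hcdef] at hu; linarith [hu.1])]
          rw [hcdef] at hu
          linarith [hu.1]
        · have : b ≤ zL n i s := zL_mono hs h (by omega)
          rw [abs_of_neg (by rw [hddef] at hu; linarith [hu.2])]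
          rw [hddef] at hu
          linarith [hu.2]
      calc (s j / 4)^(n+1) = ∏ i ∈ range (n+1), (s j / 4) := by
            rw [Finset.prod_const, Finset.card_range]
        _ ≤ ∏ i ∈ range (n+1), |u - zL n i s| := by
            apply Finset.prod_le_prod
            · intro i _; positivity
            · exact hfac
        _ = |eval u (w n s)| := by rw [eval_w, Finset.abs_prod]
        _ = |((-1:ℝ))^(n+(j:ℕ)) * eval u (w n s)| := by
            rw [abs_mul, abs_pow, abs_neg, abs_one, one_pow, one_mul]
        _ = ((-1:ℝ))^(n+(j:ℕ)) * eval u (w n s) := by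
            rw [abs_of_nonneg (sign_w_nonneg hs j.2 hu1 hu2)]
        _ = (∏ i ∈ Finset.Ico 0 ((j:ℕ)+1), (u - zL n i s))
              * ∏ i ∈ Finset.Ico ((j:ℕ)+1) (n+1), (zL n i s - u) :=
            sign_w hs j.2 hu1 hu2
  refine le_trans ?_ step2
  rw [intervalIntegral.integral_const, smul_eq_mul]
  have : d - c = s j / 2 := by rw [hddef, hcdef]; linarith
  rw [this]


/-! ### Surjectivity of G onto the positive orthant -/

lemma isOpen_U : IsOpen (U : Set (Fin n → ℝ)) := by
  have : (U : Set (Fin n → ℝ)) = ⋂ i, {s | 0 < s i} := by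
    ext s; simp [U, Set.mem_iInter]
  rw [this]
  exact isOpen_iInter_of_finite (fun i => isOpen_lt continuous_const (continuous_apply i))

lemma convex_U : Convex ℝ (U : Set (Fin n → ℝ)) := by
  intro x hx y hy a b ha hb hab
  intro i
  simp only [Pi.add_apply, Pi.smul_apply, smul_eq_mul]
  rcases eq_or_lt_of_le ha with rfl | ha'
  · simp only [zero_mul, zero_add]
    have : b = 1 := by linarith
    rw [this, one_mul]; exact hy i
  · have h1 : 0 < a * x i := mul_pos ha' (hx i)
    have h2 : 0 ≤ b * y i := mul_nonneg hb (le_of_lt (hy i))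
    linarith

lemma LG_injective {s : Fin n → ℝ} (hs : s ∈ U) : Function.Injective (LG s) := by
  intro x y hxy
  have : LG s (x - y) = 0 := by rw [map_sub, hxy, sub_self]
  have h0 := LG_inj hs this
  exact sub_eq_zero.1 h0

lemma isOpen_image_G : IsOpen (Gfun '' (U : Set (Fin n → ℝ))) := by
  rw [isOpen_iff_mem_nhds]
  rintro _ ⟨s, hs, rfl⟩
  have hstrict : HasStrictFDerivAt Gfun (fderiv ℝ Gfun s) s :=
    (contDiff_G.contDiffAt).hasStrictFDerivAt (by simp)
  have hfd : fderiv ℝ Gfun s = LG s := (hasFDeriv_G s).fderiv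
  rw [hfd] at hstrict
  set e := LinearEquiv.ofInjectiveEndo (LG s).toLinearMap (LG_injective hs) with he
  have hcoe : (e.toContinuousLinearEquiv : (Fin n → ℝ) →L[ℝ] (Fin n → ℝ)) = LG s := by
    ext x
    rfl
  rw [← hcoe] at hstrict
  have hmap := hstrict.map_nhds_eq_of_equiv
  rw [← hmap]
  exact Filter.image_mem_map (isOpen_U.mem_nhds hs)

lemma closure_image_G {d : Fin n → ℝ} (hd : d ∈ U)
    (hcl : d ∈ closure (Gfun '' (U : Set (Fin n → ℝ)))) :
    d ∈ Gfun '' (U : Set (Fin n → ℝ)) := by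
  rw [mem_closure_iff_seq_limit] at hcl
  obtain ⟨x, hxS, hxlim⟩ := hcl
  choose sq hsqU hsqG using hxS
  -- eventual bound on the values
  have hev : ∀ᶠ m in Filter.atTop, ∀ j, Gfun (sq m) j ≤ d j + 1 := by
    have : ∀ᶠ m in Filter.atTop, dist (x m) d ≤ 1 :=
      Filter.Tendsto.eventually hxlim (Metric.closedBall_mem_nhds d one_pos)
    filter_upwards [this] with m hm j
    have := dist_le_pi_dist (x m) d j
    have h2 : |x m j - d j| ≤ 1 := le_trans (by rw [Real.dist_eq] at this; exact this) hm
    rw [abs_le] at h2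
    rw [hsqG m] at *
    linarith [h2.2]
  obtain ⟨m₀, hm₀⟩ := Filter.eventually_atTop.1 hev
  -- gap bounds
  set B : Fin n → ℝ := fun j => 4 * d j + 8 with hB
  have hgap : ∀ m ≥ m₀, ∀ j, sq m j ≤ B j := by
    intro m hm j
    by_contra hcon
    push_neg at hcon
    have h1 := Gfun_ge (hsqU m) j
    have h2 := hm₀ m hm j
    have hdj := hd j
    have hs4 : 2 ≤ sq m j / 4 := by rw [hB] at hcon; simp at hcon; linarith
    have hpow : sq m j / 4 ≤ (sq m j / 4)^(n+1) := le_self_pow₀ (by linarith) (by omega)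
    have : (sq m j / 2) * (sq m j / 4) ≤ (sq m j / 2) * (sq m j / 4)^(n+1) := by
      apply mul_le_mul_of_nonneg_left hpow
      linarith
    rw [hB] at hcon; simp at hcon
    nlinarith
  -- compactness
  set K : Set (Fin n → ℝ) := Set.pi Set.univ (fun j => Set.Icc 0 (B j)) with hK
  have hKcomp : IsCompact K := isCompact_univ_pi (fun j => isCompact_Icc)
  have hmem : ∀ m, sq (m₀ + m) ∈ K := by
    intro m
    rw [hK, Set.mem_pi]
    intro j _
    exact ⟨le_of_lt (hsqU (m₀ + m) j), hgap (m₀ + m) (by omega) j⟩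
  obtain ⟨sstar, hsstarK, φ, hφ, hsublim⟩ := hKcomp.tendsto_subseq hmem
  have hGcont : Continuous (Gfun (n := n)) := contDiff_G.continuous
  -- G s* = d
  have hGlim : Filter.Tendsto (fun m => Gfun (sq (m₀ + φ m))) Filter.atTop (nhds d) := by
    have : Filter.Tendsto (fun m => x (m₀ + φ m)) Filter.atTop (nhds d) := by
      apply hxlim.comp
      apply Filter.tendsto_atTop_mono (fun m => Nat.le_add_left (φ m) m₀)
      exact hφ.tendsto_atTop
    convert this using 2 with m
    exact (hsqG (m₀ + φ m)).symm ▸ rfl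
  have hGstar : Gfun sstar = d := by
    have h1 : Filter.Tendsto (fun m => Gfun (sq (m₀ + φ m))) Filter.atTop (nhds (Gfun sstar)) :=
      (hGcont.tendsto sstar).comp hsublim
    exact tendsto_nhds_unique h1 hGlim
  -- s* is interior
  have hsstarU : sstar ∈ U := by
    intro j
    set C : ℝ := (1 + ∑ i, B i)^(n+1) with hC
    have hCpos : 0 < C := by
      rw [hC]
      apply pow_pos
      have : 0 ≤ ∑ i, B i := Finset.sum_nonneg (fun i _ => by
        have := hd i; rw [hB]; dsimp; linarith)
      linarith
    have hub : ∀ m, Gfun (sq (m₀ + φ m)) j ≤ sq (m₀ + φ m) j * C := by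
      intro m
      exact Gfun_le (hsqU _) (fun i => (Set.mem_pi.1 (hmem (φ m)) i (Set.mem_univ i)).2) j
    have hlim2 : Filter.Tendsto (fun m => sq (m₀ + φ m) j * C) Filter.atTop
        (nhds (sstar j * C)) := by
      apply Filter.Tendsto.mul_const
      exact (continuous_apply j).continuousAt.tendsto.comp hsublim
    have hlim1 : Filter.Tendsto (fun m => Gfun (sq (m₀ + φ m)) j) Filter.atTop (nhds (d j)) :=
      ((continuous_apply j).continuousAt.tendsto.comp hGlim)
    have hle : d j ≤ sstar j * C := le_of_tendsto_of_tendsto' hlim1 hlim2 hub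
    have := hd j
    by_contra hcon
    push_neg at hcon
    have h0 : sstar j ≤ 0 := hcon
    nlinarith
  exact ⟨sstar, hsstarU, hGstar⟩

theorem G_surj (d : Fin n → ℝ) (hd : d ∈ U) : ∃ s ∈ U, Gfun s = d := by
  set S := Gfun '' (U : Set (Fin n → ℝ)) with hS
  have hsub : ∀ e ∈ U, e ∈ S := by
    by_contra hcon
    push_neg at hcon
    obtain ⟨e, heU, heS⟩ := hcon
    have hpre : IsPreconnected (U : Set (Fin n → ℝ)) := convex_U.isPreconnected
    have hcover : (U : Set (Fin n → ℝ)) ⊆ S ∪ (closure S)ᶜ := by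
      intro p hp
      by_cases hps : p ∈ closure S
      · exact Or.inl (closure_image_G hp hps)
      · exact Or.inr hps
    have hUS : ((U : Set (Fin n → ℝ)) ∩ S).Nonempty := by
      refine ⟨Gfun (fun _ => 1), ?_, ⟨(fun _ => 1), fun i => one_pos, rfl⟩⟩
      exact fun j => Gfun_pos (fun i => one_pos) j
    have hUB : ((U : Set (Fin n → ℝ)) ∩ (closure S)ᶜ).Nonempty :=
      ⟨e, heU, fun hc => heS (closure_image_G heU hc)⟩
    obtain ⟨q, hq⟩ := hpre S (closure S)ᶜ isOpen_image_G (isClosed_closure).isOpen_compl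
      hcover hUS hUB
    exact hq.2.2 (subset_closure hq.2.1)
  obtain ⟨s, hs, hGs⟩ := hsub d hd
  exact ⟨s, hs, hGs⟩


/-! ### Final assembly -/

theorem main_pos (M : ℕ) (f : ℕ → ℝ)
    (halt : ∀ i ≤ M, 0 < (-1 : ℝ) ^ i * (f (i + 1) - f i)) :
    ∃ (p : Polynomial ℝ) (y : ℕ → ℝ), p.natDegree = M + 1 ∧
      (∀ i j, i < j → j ≤ M + 1 → y i < y j) ∧
      (∀ i ≤ M + 1, p.eval (y i) = f i) ∧
      (∀ i, 1 ≤ i → i ≤ M → (Polynomial.derivative p).eval (y i) = 0) := by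
  obtain _ | n := M
  · -- M = 0 : linear polynomial
    have h0 := halt 0 (le_refl 0)
    simp only [pow_zero, one_mul] at h0
    refine ⟨C (f 1 - f 0) * X + C (f 0), fun i => (i : ℝ), ?_, ?_, ?_, ?_⟩
    · rw [natDegree_linear (by linarith)]
    · intro i j hij _
      exact Nat.cast_lt.2 hij
    · intro i hi
      interval_cases i <;> simp
    · intro i h1 h0'; omega
  -- M = n + 1
  set d : Fin n → ℝ := fun j => (-1:ℝ)^((j:ℕ)+1) * (f ((j:ℕ)+2) - f ((j:ℕ)+1)) with hd_def
  have hdU : d ∈ U := by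
    intro j
    have := halt ((j:ℕ)+1) (by omega)
    rw [hd_def]
    convert this using 3 <;> omega
  obtain ⟨s, hsU, hGs⟩ := G_surj d hdU
  set sg : ℝ := (-1:ℝ)^(n+1) with hsg
  set p : ℝ[X] := C sg * pint n (w n s) + C (f 1) with hp
  have evalp : ∀ x : ℝ, eval x p = sg * Afun s x + f 1 := by
    intro x; simp [hp, Afun]
  have hpderiv : derivative p = C sg * w n s := by
    rw [hp, derivative_add, derivative_C, add_zero, derivative_C_mul,
      pint_deriv (le_of_eq (w_natDegree s))]
  have hwtop : (w n s).coeff (n+1) = 1 := by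
    have := (w_monic s).coeff_natDegree
    rwa [w_natDegree s] at this
  have hptop : (pint n (w n s)).coeff (n+2) = 1/(n+2) := by
    rw [coeff_pint_top _ (le_of_eq (w_natDegree s)), hwtop]
  have hn2ne : ((n:ℝ)+2) ≠ 0 := by positivity
  have hpintdeg : (pint n (w n s)).natDegree = n+2 := by
    apply le_antisymm
    · exact le_trans (natDegree_pint_le _) (by rw [w_natDegree s])
    · apply le_natDegree_of_ne_zero
      rw [hptop]
      exact one_div_ne_zero (by push_cast; linarith [hn2ne])
  have hsgne : sg ≠ 0 := by
    rw [hsg]; apply pow_ne_zero; norm_num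
  have hpdeg : p.natDegree = (n+1) + 1 := by
    rw [hp, natDegree_add_C, natDegree_C_mul hsgne, hpintdeg]
  -- values at the roots
  have hroot : ∀ k : ℕ, k ≤ n → eval (zL n k s) p = f (k+1) := by
    intro k hk
    induction k with
    | zero =>
      rw [zL_zero, evalp, Afun, eval_pint_zero]
      ring
    | succ m ih =>
      have hm : m < n := hk
      have hGm := congrFun hGs ⟨m, hm⟩
      simp only [Gfun, hd_def] at hGm
      have ihv := ih (by omega)
      rw [evalp] at ihv ⊢
      have ha2 : ((-1:ℝ))^(n+m) * ((-1:ℝ))^(n+m) = 1 := by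
        rw [← pow_add]
        exact Even.neg_one_pow ⟨n+m, by ring⟩
      have hsign : sg * (((-1:ℝ))^(n+m) * ((-1:ℝ))^(m+1)) = 1 := by
        rw [hsg, ← pow_add, ← pow_add]
        have : n + 1 + (n + m + (m + 1)) = 2*(n+m+1) := by ring
        rw [this]
        exact Even.neg_one_pow ⟨n+m+1, by ring⟩
      linear_combination ihv + (sg * ((-1:ℝ))^(n+m)) * hGm
        - (sg * (Afun s (zL n (m+1) s) - Afun s (zL n m s))) * ha2
        + (f (m+2) - f (m+1)) * hsign
  -- left endpoint
  have hf01 : f 0 < f 1 := by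
    have := halt 0 (by omega)
    simp only [pow_zero, one_mul] at this
    linarith
  have hpeval0 : eval 0 p = f 1 := by
    have := hroot 0 (by omega)
    rwa [zL_zero] at this
  have hplead : p.leadingCoeff = sg / (n+2) := by
    rw [leadingCoeff, hpdeg]
    rw [hp, coeff_add, coeff_C_mul, coeff_C, if_neg (by omega), add_zero]
    rw [show n + 1 + 1 = n + 2 by ring, hptop]
    ring
  have hdegpos : 0 < p.degree := by
    rw [← natDegree_pos_iff_degree_pos, hpdeg]; omega
  obtain ⟨y0, hy0lt, hy0⟩ : ∃ y0, y0 < 0 ∧ eval y0 p = f 0 := by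
    set pneg := p.comp (-X) with hpneg
    have hco : ∀ x : ℝ, eval x pneg = eval (-x) p := by
      intro x; rw [hpneg, eval_comp]; simp
    have hpnegdeg : pneg.natDegree = n+2 := by
      rw [hpneg, natDegree_comp]
      simp [hpdeg]
    have hpneglead : pneg.leadingCoeff < 0 := by
      rw [hpneg, leadingCoeff_comp (by simp), hplead, hpdeg]
      have h1 : ((-X : ℝ[X])).leadingCoeff = -1 := by simp
      rw [h1]
      have h2 : ((-1:ℝ))^(n+1+1) = ((-1:ℝ))^(n+1) * (-1) := by rw [pow_succ]
      rw [h2, hsg]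
      have h3 : ((-1:ℝ))^(n+1) * (((-1:ℝ))^(n+1) * (-1)) = -1 := by
        rw [← mul_assoc, ← pow_add]
        rw [Even.neg_one_pow ⟨n+1, by ring⟩]
        ring
      rw [div_mul_eq_mul_div, h3]
      apply div_neg_of_neg_of_pos (by norm_num)
      push_cast; linarith [hn2ne]
    have hbot : Filter.Tendsto (fun x => eval x pneg) Filter.atTop Filter.atBot := by
      apply tendsto_atBot_of_leadingCoeff_nonpos
      · rw [← natDegree_pos_iff_degree_pos, hpnegdeg]; omega
      · exact le_of_lt hpneglead
    obtain ⟨R, hR⟩ := ((hbot.eventually (Filter.eventually_lt_atBot (f 0))).and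
      (Filter.eventually_gt_atTop 0)).exists
    have hIcc := intermediate_value_Icc (by linarith : (-R:ℝ) ≤ 0)
      ((p.continuous).continuousOn)
    have hmem : f 0 ∈ Set.Icc (eval (-R) p) (eval 0 p) := by
      rw [hpeval0]
      constructor
      · rw [← hco R]; exact le_of_lt hR.1
      · exact le_of_lt hf01
    obtain ⟨y0, hy0mem, hy0⟩ := hIcc hmem
    have hy0' : eval y0 p = f 0 := hy0
    refine ⟨y0, ?_, hy0'⟩
    rcases lt_or_eq_of_le hy0mem.2 with h | h
    · exact h
    · exfalso; rw [h, hpeval0] at hy0'; linarith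
  -- right endpoint
  set Z := zL n n s with hZ
  have hpZ : eval Z p = f (n+1) := hroot n (le_refl n)
  have haltM := halt (n+1) (le_refl _)
  obtain ⟨yR, hyRgt, hyReval⟩ : ∃ yR, Z < yR ∧ eval yR p = f (n+2) := by
    rcases Nat.even_or_odd (n+1) with he | ho
    · -- even : leading coefficient positive, p → +∞, f (n+2) > f (n+1)
      have hsg1 : sg = 1 := by rw [hsg]; exact Even.neg_one_pow he
      have hfl : f (n+1) < f (n+2) := by
        rw [Even.neg_one_pow he, one_mul] at haltM
        linarith
      have htop : Filter.Tendsto (fun x => eval x p) Filter.atTop Filter.atTop := by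
        apply tendsto_atTop_of_leadingCoeff_nonneg p hdegpos
        rw [hplead, hsg1]
        positivity
      obtain ⟨R, hR⟩ := ((htop.eventually (Filter.eventually_gt_atTop (f (n+2)))).and
        (Filter.eventually_gt_atTop Z)).exists
      have hIcc := intermediate_value_Icc (le_of_lt hR.2) ((p.continuous).continuousOn)
      have hmem : f (n+2) ∈ Set.Icc (eval Z p) (eval R p) := by
        rw [hpZ]
        exact ⟨le_of_lt hfl, le_of_lt hR.1⟩
      obtain ⟨yR, hyRmem, hyR⟩ := hIcc hmem
      have hyR' : eval yR p = f (n+2) := hyR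
      refine ⟨yR, ?_, hyR'⟩
      rcases lt_or_eq_of_le hyRmem.1 with h | h
      · exact h
      · exfalso; rw [← h, hpZ] at hyR'; linarith
    · -- odd : leading coefficient negative, p → -∞, f (n+2) < f (n+1)
      have hsg1 : sg = -1 := by rw [hsg]; exact Odd.neg_one_pow ho
      have hfl : f (n+2) < f (n+1) := by
        rw [Odd.neg_one_pow ho] at haltM
        nlinarith
      have htop : Filter.Tendsto (fun x => eval x p) Filter.atTop Filter.atBot := by
        apply tendsto_atBot_of_leadingCoeff_nonpos p hdegpos
        rw [hplead, hsg1]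
        apply le_of_lt
        apply div_neg_of_neg_of_pos (by norm_num)
        push_cast; linarith [hn2ne]
      obtain ⟨R, hR⟩ := ((htop.eventually (Filter.eventually_lt_atBot (f (n+2)))).and
        (Filter.eventually_gt_atTop Z)).exists
      have hIcc := intermediate_value_Icc' (le_of_lt hR.2) ((p.continuous).continuousOn)
      have hmem : f (n+2) ∈ Set.Icc (eval R p) (eval Z p) := by
        rw [hpZ]
        exact ⟨le_of_lt hR.1, le_of_lt hfl⟩
      obtain ⟨yR, hyRmem, hyR⟩ := hIcc hmem
      have hyR' : eval yR p = f (n+2) := hyR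
      refine ⟨yR, ?_, hyR'⟩
      rcases lt_or_eq_of_le hyRmem.1 with h | h
      · exact h
      · exfalso; rw [← h, hpZ] at hyR'; linarith
  -- assemble the sequence of points
  set y : ℕ → ℝ := fun i => if i = 0 then y0 else if i ≤ n+1 then zL n (i-1) s else yR + ((i:ℝ) - (n+2)) with hy
  have hy0' : y 0 = y0 := by simp [hy]
  have hyk : ∀ i, 1 ≤ i → i ≤ n+1 → y i = zL n (i-1) s := by
    intro i h1 h2
    rw [hy]
    simp only [if_neg (by omega : ¬ i = 0), if_pos h2]
  have hyR' : y (n+2) = yR := by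
    rw [hy]
    simp only [if_neg (by omega : ¬ n+2 = 0), if_neg (by omega : ¬ n+2 ≤ n+1)]
    push_cast; ring
  have hstep : ∀ i ≤ n+1, y i < y (i+1) := by
    intro i hi
    rcases Nat.eq_zero_or_pos i with rfl | hipos
    · rw [hy0', hyk 1 (by omega) (by omega)]
      simpa [zL_zero] using hy0lt
    · rcases lt_or_eq_of_le hi with h | rfl
      · rw [hyk i (by omega) (by omega), hyk (i+1) (by omega) (by omega)]
        have : i - 1 < i + 1 - 1 := by omega
        exact zL_strict hsU this (by omega)
      · rw [hyk (n+1) (by omega) (by omega), hyR']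
        have : n + 1 - 1 = n := by omega
        rw [this]
        exact hyRgt
  have horder : ∀ j, j ≤ n+2 → ∀ i, i < j → y i < y j := by
    intro j
    induction j with
    | zero => intro _ i hi; omega
    | succ m ih =>
      intro hm i hi
      rcases Nat.lt_succ_iff_lt_or_eq.1 hi with h | rfl
      · exact lt_trans (ih (by omega) i h) (hstep m (by omega))
      · exact hstep i (by omega)
  refine ⟨p, y, by rw [hpdeg], ?_, ?_, ?_⟩
  · intro i j hij hj
    exact horder j hj i hij
  · intro i hi
    rcases Nat.eq_zero_or_pos i with rfl | hipos
    · rw [hy0']; exact hy0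
    · rcases lt_or_eq_of_le hi with h | rfl
      · rw [hyk i (by omega) (by omega)]
        have := hroot (i-1) (by omega)
        rwa [show i - 1 + 1 = i by omega] at this
      · rw [hyR']; exact hyReval
  · intro i h1 h2
    rw [hyk i h1 (by omega), hpderiv, eval_mul, eval_C, eval_w_root s (by omega : i - 1 ≤ n)]
    ring

end Stmt7

/-- Chandler's lemma: given alternating values f_0, …, f_{M+1},
there exist a polynomial p of degree M+1 and points y_0 < ⋯ < y_{M+1} with
p(y_i) = f_i and p'(y_i) = 0 for 1 ≤ i ≤ M. -/
theorem stmt7 (M : ℕ) (f : ℕ → ℝ)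
    (halt : (∀ i ≤ M, 0 < (-1 : ℝ) ^ i * (f (i + 1) - f i)) ∨
      (∀ i ≤ M, (-1 : ℝ) ^ i * (f (i + 1) - f i) < 0)) :
    ∃ (p : Polynomial ℝ) (y : ℕ → ℝ), p.natDegree = M + 1 ∧
      (∀ i j, i < j → j ≤ M + 1 → y i < y j) ∧
      (∀ i ≤ M + 1, p.eval (y i) = f i) ∧
      (∀ i, 1 ≤ i → i ≤ M → (Polynomial.derivative p).eval (y i) = 0) := by
  rcases halt with h | h
  · exact Stmt7.main_pos M f h
  · obtain ⟨p, y, h1, h2, h3, h4⟩ := Stmt7.main_pos M (fun i => - f i)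
      (by
        intro i hi
        have := h i hi
        show 0 < (-1:ℝ)^i * (-f (i+1) - -f i)
        nlinarith [this])
    refine ⟨-p, y, ?_, h2, ?_, ?_⟩
    · rwa [Polynomial.natDegree_neg]
    · intro i hi
      have := h3 i hi
      rw [Polynomial.eval_neg] at *
      linarith
    · intro i hi1 hi2
      rw [Polynomial.derivative_neg, Polynomial.eval_neg, h4 i hi1 hi2, neg_zero]
end

section
/- Let f : Ω → ℝ be continuous on a compact interval Ω with a unique strict local minimum at x_0 ∈ Ω° and strictly monotone on each side of x_0 (strictly decreasing on [a, x_0], strictly increasing on [x_0, b]). Define ĥ(x) = sign(x − x_0) · sqrt(f(x) − f(x_0)). Then ĥ is continuous, strictly increasing on Ω, and f(x) = f(x_0) + ĥ(x)² for all x ∈ Ω. -/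
/-!
On the side of `x₀` where `f` decreases, `ĥ = -√(f - f x₀)` is the composition of two decreasing
maps; on the other side `ĥ = √(f - f x₀)` is the composition of two increasing ones, and the two
pieces meet at `ĥ x₀ = 0`. Continuity at `x₀` comes from `|ĥ| = √(f - f x₀) → 0`, and elsewhere
the sign factor is locally constant.
-/

open Set Filter Topology

namespace Real

theorem abs_sign_le_one (r : ℝ) : |sign r| ≤ 1 := by
  rcases sign_apply_eq r with h | h | h <;> simp [h]

theorem continuousAt_sign_of_ne_zero {r : ℝ} (hr : r ≠ 0) : ContinuousAt sign r := by
  rcases hr.lt_or_gt with hr | hr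
  · exact continuousAt_const.congr <| (eventually_lt_nhds hr).mono fun t ht => (sign_of_neg ht).symm
  · exact continuousAt_const.congr <| (eventually_gt_nhds hr).mono fun t ht => (sign_of_pos ht).symm

end Real

/-- The coordinate `ĥ`, in which `f = f c + ĥ²` wherever `f ≥ f c`. -/
noncomputable def morseChart (f : ℝ → ℝ) (c x : ℝ) : ℝ :=
  Real.sign (x - c) * √(f x - f c)

section MorseChart

variable {f : ℝ → ℝ} {s : Set ℝ} {c x : ℝ}

theorem morseChart_of_le (hx : x ≤ c) : morseChart f c x = -√(f x - f c) := by
  rcases hx.lt_or_eq with hx | rfl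
  · simp [morseChart, Real.sign_of_neg (sub_neg.2 hx)]
  · simp [morseChart]

theorem morseChart_of_ge (hx : c ≤ x) : morseChart f c x = √(f x - f c) := by
  rcases hx.lt_or_eq with hx | rfl
  · simp [morseChart, Real.sign_of_pos (sub_pos.2 hx)]
  · simp [morseChart]

theorem morseChart_sq (h : f c ≤ f x) : morseChart f c x ^ 2 = f x - f c := by
  rcases le_total x c with hx | hx
  · rw [morseChart_of_le hx, neg_sq, Real.sq_sqrt (sub_nonneg.2 h)]
  · rw [morseChart_of_ge hx, Real.sq_sqrt (sub_nonneg.2 h)]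

theorem continuousOn_morseChart (hf : ContinuousOn f s) : ContinuousOn (morseChart f c) s := by
  intro x hx
  have hsqrt : ContinuousOn (fun y => √(f y - f c)) s := (hf.sub continuousOn_const).sqrt
  rcases eq_or_ne x c with rfl | hxc
  · have hbound (y : ℝ) : ‖morseChart f x y‖ ≤ √(f y - f x) := by
      rw [morseChart, norm_mul, Real.norm_of_nonneg (Real.sqrt_nonneg _)]
      exact mul_le_of_le_one_left (Real.sqrt_nonneg _) (Real.abs_sign_le_one _)
    have hlim : Tendsto (fun y => √(f y - f x)) (𝓝[s] x) (𝓝 0) := by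
      simpa [ContinuousWithinAt] using hsqrt x hx
    simpa [ContinuousWithinAt, morseChart] using squeeze_zero_norm hbound hlim
  · have hsign : ContinuousWithinAt (fun y => Real.sign (y - c)) s x :=
      (Real.continuousAt_sign_of_ne_zero (sub_ne_zero.2 hxc)).comp_continuousWithinAt
        (f := fun y => y - c) (by fun_prop)
    exact hsign.mul (hsqrt x hx)

theorem strictMonoOn_morseChart_of_strictAntiOn (hf : StrictAntiOn f s) (hmin : IsMinOn f s c)
    (hs : ∀ x ∈ s, x ≤ c) : StrictMonoOn (morseChart f c) s := by
  intro x hx y hy hxy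
  rw [morseChart_of_le (hs x hx), morseChart_of_le (hs y hy), neg_lt_neg_iff]
  exact Real.sqrt_lt_sqrt (sub_nonneg.2 (hmin hy)) (sub_lt_sub_right (hf hx hy hxy) _)

theorem strictMonoOn_morseChart_of_strictMonoOn (hf : StrictMonoOn f s) (hmin : IsMinOn f s c)
    (hs : ∀ x ∈ s, c ≤ x) : StrictMonoOn (morseChart f c) s := by
  intro x hx y hy hxy
  rw [morseChart_of_ge (hs x hx), morseChart_of_ge (hs y hy)]
  exact Real.sqrt_lt_sqrt (sub_nonneg.2 (hmin hx)) (sub_lt_sub_right (hf hx hy hxy) _)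

end MorseChart

theorem stmt18_general (a b x0 : ℝ) (hax : a < x0) (hxb : x0 < b) (f : ℝ → ℝ)
    (hf : ContinuousOn f (Set.Icc a b))
    (hdec : StrictAntiOn f (Set.Icc a x0))
    (hinc : StrictMonoOn f (Set.Icc x0 b)) :
    ContinuousOn (fun x => Real.sign (x - x0) * Real.sqrt (f x - f x0)) (Set.Icc a b) ∧
    StrictMonoOn (fun x => Real.sign (x - x0) * Real.sqrt (f x - f x0)) (Set.Icc a b) ∧
    ∀ x ∈ Set.Icc a b,
      f x = f x0 + (Real.sign (x - x0) * Real.sqrt (f x - f x0)) ^ 2 := by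
  have hminOn : IsMinOn f (Icc a b) x0 := isMinOn_Icc_of_anti_mono hdec.antitoneOn hinc.monotoneOn
  refine ⟨continuousOn_morseChart hf, ?_, fun x hx => ?_⟩
  · have hleft := strictMonoOn_morseChart_of_strictAntiOn hdec
      (hminOn.on_subset (Icc_subset_Icc_right hxb.le)) fun _ hx => hx.2
    have hright := strictMonoOn_morseChart_of_strictMonoOn hinc
      (hminOn.on_subset (Icc_subset_Icc_left hax.le)) fun _ hx => hx.1
    rw [← Icc_union_Icc_eq_Icc hax.le hxb.le]
    exact hleft.union hright (isGreatest_Icc hax.le) (isLeast_Icc hxb.le)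
  · change f x = f x0 + morseChart f x0 x ^ 2
    rw [morseChart_sq (hminOn hx)]
    ring

/-- for f continuous with a unique strict local minimum at x₀,
strictly decreasing on [a,x₀] and strictly increasing on [x₀,b], the function
ĥ(x) = sign(x − x₀)·√(f(x) − f(x₀)) is continuous, strictly increasing, and
f(x) = f(x₀) + ĥ(x)² on [a,b]. -/
theorem stmt18 (a b x0 : ℝ) (hax : a < x0) (hxb : x0 < b) (f : ℝ → ℝ)
    (hf : ContinuousOn f (Set.Icc a b))
    (hmin : ∀ x ∈ Set.Icc a b, x ≠ x0 → f x0 < f x)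
    (hdec : StrictAntiOn f (Set.Icc a x0))
    (hinc : StrictMonoOn f (Set.Icc x0 b)) :
    ContinuousOn (fun x => Real.sign (x - x0) * Real.sqrt (f x - f x0)) (Set.Icc a b) ∧
    StrictMonoOn (fun x => Real.sign (x - x0) * Real.sqrt (f x - f x0)) (Set.Icc a b) ∧
    ∀ x ∈ Set.Icc a b,
      f x = f x0 + (Real.sign (x - x0) * Real.sqrt (f x - f x0)) ^ 2 :=
  stmt18_general a b x0 hax hxb f hf hdec hinc
end
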